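/- arXiv:math/0608211 — 3 statements merged into one kernel-verified Lean document; each statement's English description precedes it below -/
import Mathlib

section
/- Let $\{p_n(j)\}$ with $p_n(j) = w(j)/W_n$, $W_n = \sum_{q=0}^n w(q)$, for positive weights $w(j)$ with $w(0)=1$. Let $f_j(t) = \mathbf{E} e^{itY(j)}$ be characteristic functions of independent random lengths $Y(j)\ge 0$, and define $\varphi_n(t)$ recursively by $\varphi_0(t)=1$ and $\varphi_{n+1}(t) = \sum_{j=0}^n p_n(j)\varphi_j(t) f_{n+1}(t)$. Then for all $n\ge 0$, $\varphi_{n+1}(t) = f_{n+1}(t)\prod_{j=1}^n [1 + (f_j(t)-1)p_j(j)]$. -/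
open Filter Finset Topology

/-- Product formula for the conditional characteristic function of the depth:
if `φ_{n+1}(t) = (∑_{j=0}^n p_n(j) φ_j(t)) f_{n+1}(t)` with `φ_0 = 1` and
`p_n(j) = w(j)/W_n`, then `φ_{n+1}(t) = f_{n+1}(t) ∏_{j=1}^n (1 + (f_j(t)-1) p_j(j))`. -/
theorem recursive_tree_charFun_product
    (w : ℕ → ℝ) (hw : ∀ j, 0 < w j) (hw0 : w 0 = 1)
    (W : ℕ → ℝ) (hW : ∀ n, W n = ∑ q ∈ range (n + 1), w q)
    (p : ℕ → ℕ → ℝ) (hp : ∀ n j, p n j = w j / W n)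
    (f : ℕ → ℝ → ℂ) (φ : ℕ → ℝ → ℂ)
    (hφ0 : ∀ t, φ 0 t = 1)
    (hφrec : ∀ n t, φ (n + 1) t = (∑ j ∈ range (n + 1), (p n j : ℂ) * φ j t) * f (n + 1) t)
    (n : ℕ) (t : ℝ) :
    φ (n + 1) t = f (n + 1) t * ∏ j ∈ Icc 1 n, (1 + (f j t - 1) * (p j j : ℂ)) := by
  have hWpos : ∀ m, 0 < W m := by
    intro m
    rw [hW]
    exact Finset.sum_pos (fun i _ => hw i) (by simp)
  have hWsucc : ∀ m, W (m + 1) = W m + w (m + 1) := by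
    intro m
    rw [hW, hW, Finset.sum_range_succ]
  have key : ∀ m, (∑ j ∈ range (m + 1), (p m j : ℂ) * φ j t) =
      ∏ j ∈ Icc 1 m, (1 + (f j t - 1) * (p j j : ℂ)) := by
    intro m
    induction m with
    | zero =>
      simp [hφ0, hp, hW, hw0]
    | succ k ih =>
      have hWk := (hWpos k).ne'
      have hWk1 := (hWpos (k + 1)).ne'
      rw [Finset.sum_range_succ]
      have hstep : ∀ j, (p (k + 1) j : ℂ) = (p k j : ℂ) * (W k / W (k + 1) : ℝ) := by
        intro j
        have hr : p (k + 1) j = p k j * (W k / W (k + 1)) := by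
          rw [hp, hp]; field_simp
        rw [hr]; push_cast; ring
      have h1 : (∑ j ∈ range (k + 1), (p (k + 1) j : ℂ) * φ j t)
          = ((W k / W (k + 1) : ℝ) : ℂ) * ∏ j ∈ Icc 1 k, (1 + (f j t - 1) * (p j j : ℂ)) := by
        rw [← ih, Finset.mul_sum]
        apply Finset.sum_congr rfl
        intro j _
        rw [hstep j]
        ring
      rw [h1, hφrec k t, ih]
      rw [Finset.prod_Icc_succ_top (by omega)]
      have hcoef : ((W k / W (k + 1) : ℝ) : ℂ) + (p (k + 1) (k + 1) : ℂ) * f (k + 1) t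
          = 1 + (f (k + 1) t - 1) * (p (k + 1) (k + 1) : ℂ) := by
        have : ((W k / W (k + 1) : ℝ) : ℂ) = 1 - (p (k + 1) (k + 1) : ℂ) := by
          rw [hp]
          push_cast
          rw [hWsucc k]
          have hne : (W k : ℂ) + (w (k + 1) : ℂ) ≠ 0 := by
            rw [← Complex.ofReal_add, ← hWsucc]
            exact_mod_cast hWk1
          push_cast
          rw [eq_sub_iff_add_eq, ← add_div, div_self hne]
        rw [this]; ring
      calc ((W k / W (k + 1) : ℝ) : ℂ) * ∏ j ∈ Icc 1 k, (1 + (f j t - 1) * (p j j : ℂ))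
            + (p (k + 1) (k + 1) : ℂ)
              * ((∏ j ∈ Icc 1 k, (1 + (f j t - 1) * (p j j : ℂ))) * f (k + 1) t)
          = (((W k / W (k + 1) : ℝ) : ℂ) + (p (k + 1) (k + 1) : ℂ) * f (k + 1) t)
              * ∏ j ∈ Icc 1 k, (1 + (f j t - 1) * (p j j : ℂ)) := by ring
        _ = _ := by rw [hcoef]; ring
  rw [hφrec n t, key n]
  ring
end

section
/- Given the environment (the weight sequence), the distance $D_{n+1}$ from vertex $v(n+1)$ to the root in a weighted random recursive tree has the same distribution as $I_1 Y(1) + \cdots + I_n Y(n) + Y(n+1)$, where $\{I_j\}_{j=1}^n$ are independent Bernoulli random variables with $\mathbf{P}(I_j = 1) = p_j(j) = w(j)/W_j$, independent of the independent edge lengths $\{Y(j)\}$. -/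
open Filter Finset Topology MeasureTheory ProbabilityTheory

namespace DepthAux

variable {ι Ω : Type*} [MeasurableSpace Ω] {μ : Measure Ω}

/-- The σ-algebra generated by all coordinates except `i₀`. -/
def famSup (f : ι → Ω → ℝ) (i₀ : ι) : MeasurableSpace Ω :=
  ⨆ i ∈ ({i₀}ᶜ : Set ι), MeasurableSpace.comap (f i) inferInstance

lemma measurable_famSup {f : ι → Ω → ℝ} {i₀ i : ι} (hi : i ≠ i₀) :
    Measurable[famSup f i₀] (f i) :=
  Measurable.of_comap_le (le_biSup (fun i => MeasurableSpace.comap (f i) inferInstance)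
    (by simpa using hi))

lemma key {f : ι → Ω → ℝ} (hmeas : ∀ i, Measurable (f i))
    (hind : iIndepFun f μ) (i₀ : ι)
    {A : Set Ω} (hA : MeasurableSet[MeasurableSpace.comap (f i₀) inferInstance] A)
    {g : Ω → ℝ} (hg : Measurable[famSup f i₀] g) {s : Set ℝ} (hs : MeasurableSet s) :
    μ (A ∩ g ⁻¹' s) = μ A * μ (g ⁻¹' s) := by
  have h := indep_biSup_compl (fun i => (hmeas i).comap_le) hind.iIndep ({i₀} : Set ι)
  rw [Indep_iff] at h
  refine h _ _ ?_ (hg hs)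
  have hle : MeasurableSpace.comap (f i₀) inferInstance
      ≤ ⨆ i ∈ ({i₀} : Set ι), MeasurableSpace.comap (f i) inferInstance :=
    le_biSup (fun i => MeasurableSpace.comap (f i) inferInstance) (Set.mem_singleton i₀)
  exact hle _ hA

lemma indepFun_of_famSup {f : ι → Ω → ℝ} (hmeas : ∀ i, Measurable (f i))
    (hind : iIndepFun f μ) (i₀ : ι)
    {g : Ω → ℝ} (hg : Measurable[famSup f i₀] g) :
    IndepFun g (f i₀) μ := by
  rw [IndepFun_iff]
  rintro t1 t2 ⟨s1, hs1, rfl⟩ ⟨s2, hs2, rfl⟩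
  rw [Set.inter_comm, mul_comm]
  exact key hmeas hind i₀ ⟨s2, hs2, rfl⟩ hg hs1

/-- Convolution-type operation. -/
noncomputable def addMap (ρ τ : Measure ℝ) : Measure ℝ :=
  Measure.map (fun p : ℝ × ℝ => p.1 + p.2) (ρ.prod τ)

lemma map_add_eq_addMap [IsFiniteMeasure μ] {X Z : Ω → ℝ}
    (hX : Measurable X) (hZ : Measurable Z) (h : IndepFun X Z μ) :
    Measure.map (fun ω => X ω + Z ω) μ = addMap (Measure.map X μ) (Measure.map Z μ) := by
  have h2 := (indepFun_iff_map_prod_eq_prod_map_map hX.aemeasurable hZ.aemeasurable).1 h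
  rw [addMap, ← h2, Measure.map_map measurable_add (hX.prodMk hZ)]
  rfl

lemma addMap_sum {t : Finset ℕ} {c : ℕ → ENNReal} {ν : ℕ → Measure ℝ} {τ : Measure ℝ}
    [IsProbabilityMeasure τ] :
    addMap (∑ j ∈ t, c j • ν j) τ = ∑ j ∈ t, c j • addMap (ν j) τ := by
  ext s hs
  have hpre : MeasurableSet ((fun p : ℝ × ℝ => p.1 + p.2) ⁻¹' s) := measurable_add hs
  rw [addMap, Measure.map_apply measurable_add hs, Measure.prod_apply hpre,
    lintegral_finset_sum_measure, Measure.finset_sum_apply]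
  refine Finset.sum_congr rfl fun j hj => ?_
  rw [lintegral_smul_measure, Measure.smul_apply, smul_eq_mul, addMap,
    Measure.map_apply measurable_add hs, Measure.prod_apply hpre, smul_eq_mul]

end DepthAux

/-- Given the (deterministic) environment, the depth `D_{n+1}` has the same
distribution as `I_1 Y(1) + ⋯ + I_n Y(n) + Y(n+1)` with independent Bernoulli
`I_j`, `P(I_j = 1) = w(j)/W_j`, independent of the lengths. -/
theorem depth_eq_sum_indicators_in_distribution
    (Ω Ω' : Type*) [MeasurableSpace Ω] [MeasurableSpace Ω']
    (P : Measure Ω) (P' : Measure Ω') [IsProbabilityMeasure P] [IsProbabilityMeasure P']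
    (w : ℕ → ℝ) (hw : ∀ j, 0 < w j) (hw0 : w 0 = 1)
    (W : ℕ → ℝ) (hW : ∀ n, W n = ∑ q ∈ range (n + 1), w q)
    -- the tree model: parent choices K and edge lengths Y, all independent
    (Y : ℕ → Ω → ℝ) (K : ℕ → Ω → ℕ)
    (hYmeas : ∀ j, Measurable (Y j)) (hKmeas : ∀ j, Measurable (K j))
    (hYpos : ∀ j ω, 0 ≤ Y j ω)
    (hindep : iIndepFun
      (Sum.elim (fun n ω => (K n ω : ℝ)) Y) P)
    (hKrange : ∀ n ω, K (n + 1) ω ≤ n)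
    (hKdist : ∀ n j, j ≤ n → P {ω | K (n + 1) ω = j} = ENNReal.ofReal (w j / W n))
    (D : ℕ → Ω → ℝ) (hD0 : ∀ ω, D 0 ω = 0)
    (hDrec : ∀ n ω, D (n + 1) ω = D (K (n + 1) ω) ω + Y (n + 1) ω)
    -- the comparison model: independent indicators and lengths
    (I : ℕ → Ω' → ℝ) (Y' : ℕ → Ω' → ℝ)
    (hImeas : ∀ j, Measurable (I j)) (hY'meas : ∀ j, Measurable (Y' j))
    (hindep' : iIndepFun
      (Sum.elim I Y') P')
    (hIval : ∀ j ω, I j ω = 0 ∨ I j ω = 1)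
    (hIdist : ∀ j, 1 ≤ j → P' {ω | I j ω = 1} = ENNReal.ofReal (w j / W j))
    (hY'dist : ∀ j, IdentDistrib (Y' j) (Y j) P' P)
    (n : ℕ) :
    Measure.map (D (n + 1)) P =
      Measure.map (fun ω => (∑ j ∈ Icc 1 n, I j ω * Y' j ω) + Y' (n + 1) ω) P' := by
  classical
  -- basic facts about the weights
  have Wpos : ∀ m, 0 < W m := by
    intro m
    rw [hW m]
    exact Finset.sum_pos (fun i _ => hw i) nonempty_range_add_one
  have Wsucc : ∀ m, W (m + 1) = W m + w (m + 1) := by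
    intro m
    rw [hW, hW, Finset.sum_range_succ]
  -- measurability of the coordinate families
  have hfmeas : ∀ i : ℕ ⊕ ℕ, Measurable (Sum.elim (fun q ω => (K q ω : ℝ)) Y i) := by
    rintro (q | q)
    · exact measurable_from_top.comp (hKmeas q)
    · exact hYmeas q
  have hf'meas : ∀ i : ℕ ⊕ ℕ, Measurable (Sum.elim I Y' i) := by
    rintro (q | q)
    · exact hImeas q
    · exact hY'meas q
  -- measurability of D with respect to any σ-algebra making the relevant data measurable
  have Dm : ∀ (𝔪 : MeasurableSpace Ω) (m : ℕ),
      (∀ j k, 1 ≤ j → j ≤ m → MeasurableSet[𝔪] {ω | K j ω = k}) →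
      (∀ j, 1 ≤ j → j ≤ m → Measurable[𝔪] (Y j)) → Measurable[𝔪] (D m) := by
    intro 𝔪 m
    induction m using Nat.strong_induction_on with
    | _ m IH =>
      match m with
      | 0 =>
        intro _ _
        have h0 : D 0 = fun _ => (0 : ℝ) := funext hD0
        rw [h0]
        exact measurable_const
      | (m + 1) =>
        intro hK hY'm
        have hrep : D (m + 1) = fun ω => ∑ j ∈ range (m + 1),
            ({ω' | K (m + 1) ω' = j}.indicator (fun ω' => D j ω' + Y (m + 1) ω')) ω := by
          funext ω
          have h1 : ∑ j ∈ range (m + 1),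
              ({ω' | K (m + 1) ω' = j}.indicator (fun ω' => D j ω' + Y (m + 1) ω')) ω
              = D (K (m + 1) ω) ω + Y (m + 1) ω := by
            rw [Finset.sum_eq_single_of_mem (K (m + 1) ω)
              (Finset.mem_range.2 (Nat.lt_succ_of_le (hKrange m ω)))]
            · exact Set.indicator_of_mem (show ω ∈ {ω' | K (m + 1) ω' = K (m + 1) ω} from rfl)
                (fun ω' => D (K (m + 1) ω) ω' + Y (m + 1) ω')
            · intro c _ hc
              apply Set.indicator_of_notMem
              intro h
              simp only [Set.mem_setOf_eq] at h
              exact hc h.symm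
          rw [hDrec m ω]
          exact h1.symm
        rw [hrep]
        refine Finset.measurable_sum _ fun j hj => ?_
        refine Measurable.indicator ?_ ?_
        · have hjm : j < m + 1 := Finset.mem_range.1 hj
          refine Measurable.add ?_ (hY'm (m + 1) (Nat.succ_le_succ (Nat.zero_le m)) le_rfl)
          exact IH j hjm
            (fun a k h1 h2 => hK a k h1 (by omega))
            (fun a h1 h2 => hY'm a h1 (by omega))
        · exact hK (m + 1) j (Nat.succ_le_succ (Nat.zero_le m)) le_rfl
  have hDmeas : ∀ m, Measurable (D m) :=
    fun m => Dm _ m (fun j k _ _ => hKmeas j (measurableSet_singleton k))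
      (fun j _ _ => hYmeas j)
  -- the key structural lemma ("main step")
  have main : ∀ m : ℕ,
      Measure.map (fun ω => ∑ j ∈ Icc 1 m, I j ω * Y' j ω) P'
        = ∑ j ∈ range (m + 1), ENNReal.ofReal (w j / W m) • Measure.map (D j) P →
      Measure.map (D (m + 1)) P
        = Measure.map (fun ω => (∑ j ∈ Icc 1 m, I j ω * Y' j ω) + Y' (m + 1) ω) P' := by
    intro m hC
    have hTmmeas : Measurable (fun ω : Ω' => ∑ j ∈ Icc 1 m, I j ω * Y' j ω) :=
      Finset.measurable_sum _ fun j _ => (hImeas j).mul (hY'meas j)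
    have hgmeas : ∀ j, Measurable (fun ω => D j ω + Y (m + 1) ω) :=
      fun j => (hDmeas j).add (hYmeas (m + 1))
    haveI : IsProbabilityMeasure (Measure.map (Y (m + 1)) P) :=
      Measure.isProbabilityMeasure_map (hYmeas (m + 1)).aemeasurable
    -- independence of the comparison sum and the fresh length
    have hTmsup : Measurable[DepthAux.famSup (Sum.elim I Y') (Sum.inr (m + 1))]
        (fun ω : Ω' => ∑ j ∈ Icc 1 m, I j ω * Y' j ω) := by
      refine Finset.measurable_sum _ fun j hj => Measurable.mul ?_ ?_
      · exact DepthAux.measurable_famSup (f := Sum.elim I Y') (i := Sum.inl j) (by simp)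
      · refine DepthAux.measurable_famSup (f := Sum.elim I Y') (i := Sum.inr j) ?_
        have := (Finset.mem_Icc.1 hj).2
        simp only [ne_eq, Sum.inr.injEq]
        omega
    have hindTm : IndepFun (fun ω : Ω' => ∑ j ∈ Icc 1 m, I j ω * Y' j ω) (Y' (m + 1)) P' :=
      DepthAux.indepFun_of_famSup hf'meas hindep' (Sum.inr (m + 1)) hTmsup
    have hstep1 : Measure.map (fun ω => (∑ j ∈ Icc 1 m, I j ω * Y' j ω) + Y' (m + 1) ω) P'
        = DepthAux.addMap (Measure.map (fun ω : Ω' => ∑ j ∈ Icc 1 m, I j ω * Y' j ω) P')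
            (Measure.map (Y' (m + 1)) P') :=
      DepthAux.map_add_eq_addMap hTmmeas (hY'meas (m + 1)) hindTm
    have hY'law : Measure.map (Y' (m + 1)) P' = Measure.map (Y (m + 1)) P :=
      (hY'dist (m + 1)).map_eq
    -- decomposition of the law of D (m+1) according to the parent choice
    have hstep2 : Measure.map (D (m + 1)) P = ∑ j ∈ range (m + 1),
        ENNReal.ofReal (w j / W m) • Measure.map (fun ω => D j ω + Y (m + 1) ω) P := by
      ext s hs
      rw [Measure.map_apply (hDmeas (m + 1)) hs]
      have hcover : D (m + 1) ⁻¹' s = ⋃ j ∈ Finset.range (m + 1),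
          ({ω | K (m + 1) ω = j} ∩ (fun ω => D j ω + Y (m + 1) ω) ⁻¹' s) := by
        ext ω
        simp only [Set.mem_preimage, Set.mem_iUnion, Finset.mem_range, Set.mem_inter_iff,
          Set.mem_setOf_eq, exists_prop]
        constructor
        · intro h
          exact ⟨K (m + 1) ω, Nat.lt_succ_of_le (hKrange m ω), rfl, by rw [← hDrec m ω]; exact h⟩
        · rintro ⟨j, hj, hKj, hmem⟩
          rw [hDrec m ω, hKj]
          exact hmem
      have hdisj : (↑(Finset.range (m + 1)) : Set ℕ).PairwiseDisjoint
          (fun j => {ω | K (m + 1) ω = j} ∩ (fun ω => D j ω + Y (m + 1) ω) ⁻¹' s) := by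
        intro a _ b _ hab
        refine Set.disjoint_left.2 ?_
        intro ω hωa hωb
        simp only [Set.mem_inter_iff, Set.mem_setOf_eq] at hωa hωb
        exact hab (hωa.1.symm.trans hωb.1)
      have hsetm : ∀ j ∈ Finset.range (m + 1),
          MeasurableSet ({ω | K (m + 1) ω = j} ∩ (fun ω => D j ω + Y (m + 1) ω) ⁻¹' s) :=
        fun j _ => (hKmeas (m + 1) (measurableSet_singleton j)).inter ((hgmeas j) hs)
      rw [hcover, measure_biUnion_finset hdisj hsetm, Measure.finset_sum_apply]
      refine Finset.sum_congr rfl fun j hj => ?_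
      have hj' : j ≤ m := Nat.lt_succ_iff.1 (Finset.mem_range.1 hj)
      have hA : MeasurableSet[MeasurableSpace.comap
          (Sum.elim (fun q ω => (K q ω : ℝ)) Y (Sum.inl (m + 1))) inferInstance]
          {ω | K (m + 1) ω = j} := by
        refine ⟨{(j : ℝ)}, measurableSet_singleton _, ?_⟩
        ext ω
        simp [Nat.cast_inj]
      have hDsup : Measurable[DepthAux.famSup (Sum.elim (fun q ω => (K q ω : ℝ)) Y)
          (Sum.inl (m + 1))] (fun ω => D j ω + Y (m + 1) ω) := by
        refine Measurable.add ?_ ?_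
        · refine Dm _ j (fun a k h1 h2 => ?_) (fun a h1 h2 => ?_)
          · have hset : {ω | K a ω = k}
                = Sum.elim (fun q ω => (K q ω : ℝ)) Y (Sum.inl a) ⁻¹' {(k : ℝ)} := by
              ext ω
              simp [Nat.cast_inj]
            rw [hset]
            refine DepthAux.measurable_famSup (i := Sum.inl a) ?_ (measurableSet_singleton _)
            simp only [ne_eq, Sum.inl.injEq]
            omega
          · exact DepthAux.measurable_famSup (i := Sum.inr a) (by simp)
        · exact DepthAux.measurable_famSup (i := Sum.inr (m + 1)) (by simp)
      rw [DepthAux.key hfmeas hindep (Sum.inl (m + 1)) hA hDsup hs, hKdist m j hj',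
        Measure.smul_apply, smul_eq_mul, Measure.map_apply (hgmeas j) hs]
    -- each summand is a convolution
    have hstep3 : ∀ j ∈ range (m + 1), Measure.map (fun ω => D j ω + Y (m + 1) ω) P
        = DepthAux.addMap (Measure.map (D j) P) (Measure.map (Y (m + 1)) P) := by
      intro j hj
      have hj' : j ≤ m := Nat.lt_succ_iff.1 (Finset.mem_range.1 hj)
      refine DepthAux.map_add_eq_addMap (hDmeas j) (hYmeas (m + 1)) ?_
      refine DepthAux.indepFun_of_famSup hfmeas hindep (Sum.inr (m + 1)) ?_
      refine Dm _ j (fun a k h1 h2 => ?_) (fun a h1 h2 => ?_)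
      · have hset : {ω | K a ω = k}
            = Sum.elim (fun q ω => (K q ω : ℝ)) Y (Sum.inl a) ⁻¹' {(k : ℝ)} := by
          ext ω
          simp [Nat.cast_inj]
        rw [hset]
        exact DepthAux.measurable_famSup (i := Sum.inl a) (by simp) (measurableSet_singleton _)
      · refine DepthAux.measurable_famSup (i := Sum.inr a) ?_
        simp only [ne_eq, Sum.inr.injEq]
        omega
    calc Measure.map (D (m + 1)) P
        = ∑ j ∈ range (m + 1),
            ENNReal.ofReal (w j / W m) • Measure.map (fun ω => D j ω + Y (m + 1) ω) P := hstep2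
      _ = ∑ j ∈ range (m + 1), ENNReal.ofReal (w j / W m) •
            DepthAux.addMap (Measure.map (D j) P) (Measure.map (Y (m + 1)) P) := by
          refine Finset.sum_congr rfl fun j hj => ?_
          rw [hstep3 j hj]
      _ = DepthAux.addMap (∑ j ∈ range (m + 1),
            ENNReal.ofReal (w j / W m) • Measure.map (D j) P) (Measure.map (Y (m + 1)) P) :=
          DepthAux.addMap_sum.symm
      _ = DepthAux.addMap (Measure.map (fun ω : Ω' => ∑ j ∈ Icc 1 m, I j ω * Y' j ω) P')
            (Measure.map (Y' (m + 1)) P') := by rw [hC, hY'law]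
      _ = Measure.map (fun ω => (∑ j ∈ Icc 1 m, I j ω * Y' j ω) + Y' (m + 1) ω) P' :=
          hstep1.symm
  -- the mixture identity, by induction
  have claimC : ∀ m : ℕ, Measure.map (fun ω => ∑ j ∈ Icc 1 m, I j ω * Y' j ω) P'
      = ∑ j ∈ range (m + 1), ENNReal.ofReal (w j / W m) • Measure.map (D j) P := by
    intro m
    induction m with
    | zero =>
      have h1 : (fun ω : Ω' => ∑ j ∈ Icc 1 0, I j ω * Y' j ω) = fun _ => (0 : ℝ) := by
        funext ω
        simp
      have h2 : D 0 = fun _ : Ω => (0 : ℝ) := funext hD0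
      have h3 : w 0 / W 0 = 1 := by
        rw [hW 0]
        simp [hw0]
      rw [h1, Finset.sum_range_one, h2, h3, ENNReal.ofReal_one, one_smul,
        Measure.map_const, Measure.map_const, measure_univ, measure_univ]
    | succ m IH =>
      have hTmm : Measurable (fun ω : Ω' => ∑ j ∈ Icc 1 m, I j ω * Y' j ω) :=
        Finset.measurable_sum _ fun j _ => (hImeas j).mul (hY'meas j)
      have hTm1 : Measurable (fun ω : Ω' => ∑ j ∈ Icc 1 (m + 1), I j ω * Y' j ω) :=
        Finset.measurable_sum _ fun j _ => (hImeas j).mul (hY'meas j)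
      have hg1 : Measurable (fun ω : Ω' => (∑ j ∈ Icc 1 m, I j ω * Y' j ω) + Y' (m + 1) ω) :=
        hTmm.add (hY'meas (m + 1))
      have hmain := main m IH
      have hsplit : ∀ ω : Ω', ∑ j ∈ Icc 1 (m + 1), I j ω * Y' j ω
          = (∑ j ∈ Icc 1 m, I j ω * Y' j ω) + I (m + 1) ω * Y' (m + 1) ω := fun ω =>
        Finset.sum_Icc_succ_top (Nat.succ_le_succ (Nat.zero_le m)) _
      ext s hs
      rw [Measure.map_apply hTm1 hs]
      have hpre : (fun ω : Ω' => ∑ j ∈ Icc 1 (m + 1), I j ω * Y' j ω) ⁻¹' s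
          = ({ω | I (m + 1) ω = 0} ∩ (fun ω : Ω' => ∑ j ∈ Icc 1 m, I j ω * Y' j ω) ⁻¹' s)
            ∪ ({ω | I (m + 1) ω = 1}
              ∩ (fun ω : Ω' => (∑ j ∈ Icc 1 m, I j ω * Y' j ω) + Y' (m + 1) ω) ⁻¹' s) := by
        ext ω
        simp only [Set.mem_preimage, Set.mem_union, Set.mem_inter_iff, Set.mem_setOf_eq]
        rcases hIval (m + 1) ω with h0 | h1
        · rw [hsplit ω, h0]
          simp [h0]
        · rw [hsplit ω, h1]
          simp [h1]
      have hdisj : Disjoint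
          ({ω | I (m + 1) ω = 0} ∩ (fun ω : Ω' => ∑ j ∈ Icc 1 m, I j ω * Y' j ω) ⁻¹' s)
          ({ω | I (m + 1) ω = 1}
            ∩ (fun ω : Ω' => (∑ j ∈ Icc 1 m, I j ω * Y' j ω) + Y' (m + 1) ω) ⁻¹' s) := by
        rw [Set.disjoint_left]
        intro ω h1 h2
        simp only [Set.mem_inter_iff, Set.mem_setOf_eq] at h1 h2
        have := h1.1.symm.trans h2.1
        norm_num at this
      have hmeas2 : MeasurableSet ({ω | I (m + 1) ω = 1}
          ∩ (fun ω : Ω' => (∑ j ∈ Icc 1 m, I j ω * Y' j ω) + Y' (m + 1) ω) ⁻¹' s) :=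
        (hImeas (m + 1) (measurableSet_singleton 1)).inter (hg1 hs)
      rw [hpre, measure_union hdisj hmeas2]
      have hA0 : MeasurableSet[MeasurableSpace.comap (Sum.elim I Y' (Sum.inl (m + 1)))
          inferInstance] {ω | I (m + 1) ω = 0} :=
        ⟨{(0 : ℝ)}, measurableSet_singleton _, rfl⟩
      have hA1 : MeasurableSet[MeasurableSpace.comap (Sum.elim I Y' (Sum.inl (m + 1)))
          inferInstance] {ω | I (m + 1) ω = 1} :=
        ⟨{(1 : ℝ)}, measurableSet_singleton _, rfl⟩
      have hsupTm : Measurable[DepthAux.famSup (Sum.elim I Y') (Sum.inl (m + 1))]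
          (fun ω : Ω' => ∑ j ∈ Icc 1 m, I j ω * Y' j ω) := by
        refine Finset.measurable_sum _ fun j hj => Measurable.mul ?_ ?_
        · refine DepthAux.measurable_famSup (i := Sum.inl j) ?_
          have := (Finset.mem_Icc.1 hj).2
          simp only [ne_eq, Sum.inl.injEq]
          omega
        · exact DepthAux.measurable_famSup (i := Sum.inr j) (by simp)
      have hsupg1 : Measurable[DepthAux.famSup (Sum.elim I Y') (Sum.inl (m + 1))]
          (fun ω : Ω' => (∑ j ∈ Icc 1 m, I j ω * Y' j ω) + Y' (m + 1) ω) :=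
        hsupTm.add (DepthAux.measurable_famSup (i := Sum.inr (m + 1)) (by simp))
      rw [DepthAux.key hf'meas hindep' (Sum.inl (m + 1)) hA0 hsupTm hs,
        DepthAux.key hf'meas hindep' (Sum.inl (m + 1)) hA1 hsupg1 hs]
      have hPA1 : P' {ω | I (m + 1) ω = 1} = ENNReal.ofReal (w (m + 1) / W (m + 1)) :=
        hIdist (m + 1) (Nat.succ_le_succ (Nat.zero_le m))
      have hA1c : {ω | I (m + 1) ω = 0} = {ω | I (m + 1) ω = 1}ᶜ := by
        ext ω
        rcases hIval (m + 1) ω with h | h <;> simp [h]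
      have hPA0 : P' {ω | I (m + 1) ω = 0} = ENNReal.ofReal (W m / W (m + 1)) := by
        have hmeasA1 : MeasurableSet {ω | I (m + 1) ω = 1} :=
          hImeas (m + 1) (measurableSet_singleton 1)
        rw [hA1c, measure_compl hmeasA1
          (measure_ne_top _ _), measure_univ, hPA1, ← ENNReal.ofReal_one,
          ← ENNReal.ofReal_sub _ (div_nonneg (hw (m + 1)).le (Wpos (m + 1)).le)]
        congr 1
        have hW1 := Wsucc m
        rw [eq_div_iff (Wpos (m + 1)).ne', sub_mul, one_mul,
          div_mul_cancel₀ _ (Wpos (m + 1)).ne']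
        linarith
      rw [hPA0, hPA1, ← Measure.map_apply hTmm hs, IH, ← Measure.map_apply hg1 hs, ← hmain]
      have hmixapply : ∀ (t : Finset ℕ) (c : ℕ → ENNReal),
          (∑ j ∈ t, c j • Measure.map (D j) P) s = ∑ j ∈ t, c j * (Measure.map (D j) P) s := by
        intro t c
        rw [Measure.finset_sum_apply]
        exact Finset.sum_congr rfl fun j _ => by rw [Measure.smul_apply, smul_eq_mul]
      rw [hmixapply, hmixapply, Finset.sum_range_succ
        (f := fun j => ENNReal.ofReal (w j / W (m + 1)) * (Measure.map (D j) P) s) (n := m + 1),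
        Finset.mul_sum]
      congr 1
      refine Finset.sum_congr rfl fun j hj => ?_
      rw [← mul_assoc, ← ENNReal.ofReal_mul (div_nonneg (Wpos m).le (Wpos (m + 1)).le)]
      congr 2
      rw [div_mul_div_comm, mul_comm (W (m + 1)) (W m), mul_div_mul_left _ _ (Wpos m).ne']
  exact main n (claimC n)
end

section
/- Let $\{S_n^-\}$ and $\{S_n^+\}$ be two independent copies of a random walk, $\widetilde{M}_l^- = \max_{1\le k\le l}S_k^-$, $L_r^+ = \min_{0\le k\le r}S_k^+$, and define for $r \ge j - l$, $l\ge 0$, $j\ge l$: $G_{l,r}(j) = e^{-S^+_{j-l}}/(\sum_{p=1}^l e^{S_p^-} + \sum_{q=0}^r e^{-S_q^+})$. Then for the original walk $S$, with $\tau(k)$ the leftmost minimum point on $[0,k]$ and $W_k = \sum_{p=0}^k e^{-S_p}$: $\mathbf{E}\big[e^{-S_j}W_k^{-1}\,;\,\tau(k) = l\big] = \mathbf{E}\big[G_{l,k-l}(j)\,;\,\widetilde{M}_l^- < 0,\ L_{k-l}^+ \ge 0\big]$ for $l \le j \le k$. -/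
open Filter Finset Topology MeasureTheory ProbabilityTheory

/-- Padded partial sum of the coordinates of a finite vector. -/
noncomputable def pSum {m : ℕ} (a : Fin m → ℝ) (p : ℕ) : ℝ :=
  ∑ i ∈ Finset.range p, if h : i < m then a ⟨i, h⟩ else 0

lemma pSum_zero {m : ℕ} (a : Fin m → ℝ) : pSum a 0 = 0 := by simp [pSum]

lemma pSum_succ {m : ℕ} (a : Fin m → ℝ) (p : ℕ) (h : p < m) :
    pSum a (p + 1) = pSum a p + a ⟨p, h⟩ := by
  rw [pSum, Finset.sum_range_succ, dif_pos h]; rfl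

lemma pSum_eq_of_step {m : ℕ} (a : Fin m → ℝ) (T : ℕ → ℝ) (h0 : T 0 = 0)
    (hstep : ∀ i (h : i < m), T (i + 1) = T i + a ⟨i, h⟩) :
    ∀ p ≤ m, pSum a p = T p := by
  intro p hp
  induction p with
  | zero => rw [pSum_zero, h0]
  | succ p ih =>
    have hpm : p < m := hp
    rw [pSum_succ a p hpm, ih (le_of_lt hpm), hstep p hpm]

lemma pSum_measurable {m : ℕ} (p : ℕ) : Measurable fun a : Fin m → ℝ => pSum a p := by
  apply Finset.measurable_sum
  intro i _
  by_cases h : i < m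
  · simp only [dif_pos h]; exact measurable_pi_apply _
  · simp only [dif_neg h]; exact measurable_const

open scoped Classical in
/-- The function `G` on finite-dimensional sample space. -/
noncomputable def Gfun (l n j : ℕ) (v : Fin l ⊕ Fin n → ℝ) : ℝ :=
  if (∀ p ∈ Finset.Icc 1 l, pSum (v ∘ Sum.inl) p < 0) ∧ (∀ q ≤ n, 0 ≤ pSum (v ∘ Sum.inr) q) then
    Real.exp (-(pSum (v ∘ Sum.inr) (j - l))) /
      ((∑ p ∈ Finset.Icc 1 l, Real.exp (pSum (v ∘ Sum.inl) p)) +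
        ∑ q ∈ Finset.range (n + 1), Real.exp (-(pSum (v ∘ Sum.inr) q)))
  else 0

lemma measurable_comp_inl {l n : ℕ} :
    Measurable fun v : Fin l ⊕ Fin n → ℝ => v ∘ Sum.inl :=
  measurable_pi_lambda _ fun i => measurable_pi_apply _

lemma measurable_comp_inr {l n : ℕ} :
    Measurable fun v : Fin l ⊕ Fin n → ℝ => v ∘ Sum.inr :=
  measurable_pi_lambda _ fun i => measurable_pi_apply _

lemma Gfun_measurable (l n j : ℕ) : Measurable (Gfun l n j) := by
  classical
  have hA : ∀ p : ℕ, Measurable fun v : Fin l ⊕ Fin n → ℝ => pSum (v ∘ Sum.inl) p :=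
    fun p => (pSum_measurable p).comp measurable_comp_inl
  have hB : ∀ q : ℕ, Measurable fun v : Fin l ⊕ Fin n → ℝ => pSum (v ∘ Sum.inr) q :=
    fun q => (pSum_measurable q).comp measurable_comp_inr
  unfold Gfun
  apply Measurable.ite
  · have : {v : Fin l ⊕ Fin n → ℝ |
        (∀ p ∈ Finset.Icc 1 l, pSum (v ∘ Sum.inl) p < 0) ∧
          (∀ q ≤ n, 0 ≤ pSum (v ∘ Sum.inr) q)} =
        (⋂ p ∈ Finset.Icc 1 l, {v | pSum (v ∘ Sum.inl) p < 0}) ∩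
          ⋂ (q : ℕ) (_ : q ≤ n), {v | 0 ≤ pSum (v ∘ Sum.inr) q} := by
      ext v; simp [Set.mem_iInter]
    rw [this]
    exact (MeasurableSet.biInter (Set.to_countable _)
        (fun p _ => measurableSet_lt (hA p) measurable_const)).inter
      (MeasurableSet.iInter fun q => MeasurableSet.iInter fun _ =>
        measurableSet_le measurable_const (hB q))
  · apply Measurable.div
    · exact (Real.measurable_exp.comp (hB (j - l)).neg)
    · exact (Finset.measurable_sum _ fun p _ => Real.measurable_exp.comp (hA p)).add
        (Finset.measurable_sum _ fun q _ => Real.measurable_exp.comp (hB q).neg)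
  · exact measurable_const

/-- The law of a finite injectively-reindexed subfamily of an independent family of real random
variables is the product of the marginal laws. -/
lemma aux_map_pi {Ω : Type*} {ι I : Type*} [Fintype I] [MeasurableSpace Ω]
    (P : Measure Ω) [IsProbabilityMeasure P]
    (f : ι → Ω → ℝ) (hmeas : ∀ i, Measurable (f i))
    (hindep : iIndepFun f P)
    (e : I → ι) (he : Function.Injective e) :
    P.map (fun ω i => f (e i) ω) = Measure.pi (fun i => P.map (f (e i))) := by
  classical
  have hX : Measurable fun ω (i : I) => f (e i) ω :=
    measurable_pi_lambda _ fun i => hmeas (e i)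
  haveI : ∀ i : I, IsProbabilityMeasure (P.map (f (e i))) := fun i =>
    Measure.isProbabilityMeasure_map (hmeas (e i)).aemeasurable
  refine (Measure.pi_eq fun s hs => ?_).symm
  rw [Measure.map_apply hX (MeasurableSet.univ_pi hs)]
  have hpre : (fun ω (i : I) => f (e i) ω) ⁻¹' Set.pi Set.univ s = ⋂ i, f (e i) ⁻¹' s i := by
    ext ω; simp [Set.mem_pi]
  rw [hpre]
  set st : ι → Set ℝ := fun m => if h : ∃ i, e i = m then s h.choose else Set.univ with hst
  have hse : ∀ i : I, st (e i) = s i := by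
    intro i
    have h : ∃ i', e i' = e i := ⟨i, rfl⟩
    simp only [hst, dif_pos h]
    rw [he h.choose_spec]
  have hmeas_st : ∀ m, m ∈ Finset.univ.image e → MeasurableSet (st m) := by
    intro m _
    by_cases h : ∃ i, e i = m
    · simp only [hst, dif_pos h]; exact hs _
    · simp only [hst, dif_neg h]; exact MeasurableSet.univ
  have key := hindep.measure_inter_preimage_eq_mul (Finset.univ.image e) hmeas_st
  have h1 : (⋂ i, f (e i) ⁻¹' s i) = ⋂ m ∈ Finset.univ.image e, f m ⁻¹' st m := by
    ext ω
    simp only [Set.mem_iInter, Finset.mem_image, Finset.mem_univ, true_and]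
    constructor
    · rintro h m ⟨i, rfl⟩
      rw [hse]; exact h i
    · intro h i
      have := h (e i) ⟨i, rfl⟩
      rwa [hse] at this
  rw [h1, key, Finset.prod_image (fun i _ i' _ h => he h)]
  refine Finset.prod_congr rfl fun i _ => ?_
  rw [hse, Measure.map_apply (hmeas (e i)) (hs i)]

/-- Decomposition at the leftmost minimum:
`E[e^{-S_j} W_k⁻¹ ; τ(k) = l] = E[G_{l,k-l}(j) ; M̃_l⁻ < 0, L_{k-l}⁺ ≥ 0]`,
where `G_{l,r}(j) = e^{-S⁺_{j-l}} / (∑_{p=1}^l e^{S⁻_p} + ∑_{q=0}^r e^{-S⁺_q})`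
is built from two independent copies `S⁻`, `S⁺` of the walk. -/
theorem decomposition_at_minimum
    (Ω Ω' : Type*) [MeasurableSpace Ω] [MeasurableSpace Ω']
    (P : Measure Ω) (P' : Measure Ω') [IsProbabilityMeasure P] [IsProbabilityMeasure P']
    -- the original walk
    (θ : ℕ → Ω → ℝ) (hmeas : ∀ i, Measurable (θ i))
    (hindep : iIndepFun θ P)
    (hident : ∀ i, IdentDistrib (θ i) (θ 1) P P)
    (S : ℕ → Ω → ℝ) (hS : ∀ n ω, S n ω = ∑ i ∈ Icc 1 n, θ i ω)
    (W : ℕ → Ω → ℝ) (hW : ∀ k ω, W k ω = ∑ q ∈ range (k + 1), Real.exp (-S q ω))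
    (τ : ℕ → Ω → ℕ)
    (hτ : ∀ k ω, τ k ω = sInf {m | m ≤ k ∧ ∀ l ≤ k, S m ω ≤ S l ω})
    -- two independent copies of the walk on `Ω'`
    (θm θp : ℕ → Ω' → ℝ)
    (hmeasm : ∀ i, Measurable (θm i)) (hmeasp : ∀ i, Measurable (θp i))
    (hindep' : iIndepFun
      (Sum.elim θm θp) P')
    (hidentm : ∀ i, IdentDistrib (θm i) (θ 1) P' P)
    (hidentp : ∀ i, IdentDistrib (θp i) (θ 1) P' P)
    (Sm : ℕ → Ω' → ℝ) (hSm : ∀ n ω, Sm n ω = ∑ i ∈ Icc 1 n, θm i ω)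
    (Sp : ℕ → Ω' → ℝ) (hSp : ∀ n ω, Sp n ω = ∑ i ∈ Icc 1 n, θp i ω)
    (l j k : ℕ) (hlj : l ≤ j) (hjk : j ≤ k) :
    ∫ ω in {ω | τ k ω = l}, Real.exp (-S j ω) / W k ω ∂P =
      ∫ ω in {ω | (∀ p ∈ Icc 1 l, Sm p ω < 0) ∧ ∀ q ≤ k - l, 0 ≤ Sp q ω},
        Real.exp (-Sp (j - l) ω) /
          ((∑ p ∈ Icc 1 l, Real.exp (Sm p ω)) +
            ∑ q ∈ range (k - l + 1), Real.exp (-Sp q ω)) ∂P' := by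
  classical
  have hlk : l ≤ k := hlj.trans hjk
  set n := k - l with hn
  have hjln : j - l ≤ n := by omega
  -- measurability of the walks
  have hSmeas : ∀ m, Measurable (S m) := by
    intro m
    have : S m = fun ω => ∑ i ∈ Icc 1 m, θ i ω := funext fun ω => hS m ω
    rw [this]; exact Finset.measurable_sum _ fun i _ => hmeas i
  have hSm_meas : ∀ m, Measurable (Sm m) := by
    intro m
    have : Sm m = fun ω => ∑ i ∈ Icc 1 m, θm i ω := funext fun ω => hSm m ω
    rw [this]; exact Finset.measurable_sum _ fun i _ => hmeasm i
  have hSp_meas : ∀ m, Measurable (Sp m) := by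
    intro m
    have : Sp m = fun ω => ∑ i ∈ Icc 1 m, θp i ω := funext fun ω => hSp m ω
    rw [this]; exact Finset.measurable_sum _ fun i _ => hmeasp i
  -- one-step recursions
  have hSstep : ∀ m ω, S (m + 1) ω = S m ω + θ (m + 1) ω := by
    intro m ω
    rw [hS, hS, Finset.sum_Icc_succ_top (by omega : 1 ≤ m + 1)]
  have hSmstep : ∀ m ω, Sm (m + 1) ω = Sm m ω + θm (m + 1) ω := by
    intro m ω
    rw [hSm, hSm, Finset.sum_Icc_succ_top (by omega : 1 ≤ m + 1)]
  have hSpstep : ∀ m ω, Sp (m + 1) ω = Sp m ω + θp (m + 1) ω := by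
    intro m ω
    rw [hSp, hSp, Finset.sum_Icc_succ_top (by omega : 1 ≤ m + 1)]
  have hS0 : ∀ ω, S 0 ω = 0 := fun ω => by rw [hS]; simp
  have hSm0 : ∀ ω, Sm 0 ω = 0 := fun ω => by rw [hSm]; simp
  have hSp0 : ∀ ω, Sp 0 ω = 0 := fun ω => by rw [hSp]; simp
  -- the random vectors
  set e : Fin l ⊕ Fin n → ℕ :=
    Sum.elim (fun i => l - (i : ℕ)) (fun i => l + 1 + (i : ℕ)) with he_def
  have he : Function.Injective e := by
    rintro (a | a) (b | b) h <;>
      simp only [he_def, Sum.elim_inl, Sum.elim_inr] at h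
    · exact congrArg Sum.inl (Fin.ext (by have := a.isLt; have := b.isLt; omega))
    · exact absurd h (by have := a.isLt; omega)
    · exact absurd h (by have := b.isLt; omega)
    · exact congrArg Sum.inr (Fin.ext (by omega))
  set e' : Fin l ⊕ Fin n → ℕ ⊕ ℕ :=
    Sum.elim (fun i => Sum.inl ((i : ℕ) + 1)) (fun i => Sum.inr ((i : ℕ) + 1)) with he'_def
  have he' : Function.Injective e' := by
    rintro (a | a) (b | b) h <;>
      simp only [he'_def, Sum.elim_inl, Sum.elim_inr, Sum.inl.injEq, Sum.inr.injEq,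
        reduceCtorEq] at h
    · exact congrArg Sum.inl (Fin.ext (by omega))
    · exact congrArg Sum.inr (Fin.ext (by omega))
  set X : Ω → (Fin l ⊕ Fin n → ℝ) := fun ω i => θ (e i) ω with hX_def
  set Y : Ω' → (Fin l ⊕ Fin n → ℝ) := fun ω i => Sum.elim θm θp (e' i) ω with hY_def
  have hf'meas : ∀ i : ℕ ⊕ ℕ, Measurable (Sum.elim θm θp i) := by
    rintro (a | b)
    · exact hmeasm a
    · exact hmeasp b
  have hXmeas : Measurable X := by
    rw [hX_def]; exact measurable_pi_lambda _ fun i => hmeas (e i)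
  have hYmeas : Measurable Y := by
    rw [hY_def]; exact measurable_pi_lambda _ fun i => hf'meas (e' i)
  -- identification of the laws
  set μ := P.map (θ 1) with hμ_def
  have hlawX : P.map X = Measure.pi (fun _ : Fin l ⊕ Fin n => μ) := by
    rw [hX_def, aux_map_pi P θ hmeas hindep e he]
    congr 1
    funext i
    exact (hident (e i)).map_eq
  have hlawY : P'.map Y = Measure.pi (fun _ : Fin l ⊕ Fin n => μ) := by
    rw [hY_def, aux_map_pi P' (Sum.elim θm θp) hf'meas hindep' e' he']
    congr 1
    funext i
    rcases i with a | b
    · exact (hidentm ((a : ℕ) + 1)).map_eq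
    · exact (hidentp ((b : ℕ) + 1)).map_eq
  -- partial sum identities
  have hXA : ∀ ω, ∀ p ≤ l, pSum (X ω ∘ Sum.inl) p = S l ω - S (l - p) ω := by
    intro ω
    refine pSum_eq_of_step _ (fun p => S l ω - S (l - p) ω) (by simp) ?_
    intro i hi
    have h1 : l - i = (l - (i + 1)) + 1 := by omega
    have := hSstep (l - (i + 1)) ω
    rw [← h1] at this
    have hx : (X ω ∘ Sum.inl) ⟨i, hi⟩ = θ (l - i) ω := by
      simp [hX_def, he_def]
    rw [hx]
    linarith [this]
  have hXB : ∀ ω, ∀ q ≤ n, pSum (X ω ∘ Sum.inr) q = S (l + q) ω - S l ω := by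
    intro ω
    refine pSum_eq_of_step _ (fun q => S (l + q) ω - S l ω) (by simp) ?_
    intro i hi
    have h1 : l + (i + 1) = (l + i) + 1 := by omega
    have := hSstep (l + i) ω
    have hx : (X ω ∘ Sum.inr) ⟨i, hi⟩ = θ (l + 1 + i) ω := by
      simp [hX_def, he_def]
    have h2 : l + 1 + i = (l + i) + 1 := by omega
    rw [hx, h2]
    rw [h1]
    linarith [this]
  have hYA : ∀ ω, ∀ p ≤ l, pSum (Y ω ∘ Sum.inl) p = Sm p ω := by
    intro ω
    refine pSum_eq_of_step _ (fun p => Sm p ω) (hSm0 ω) ?_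
    intro i hi
    have hx : (Y ω ∘ Sum.inl) ⟨i, hi⟩ = θm (i + 1) ω := by
      simp [hY_def, he'_def]
    rw [hx]
    rw [hSmstep i ω]
  have hYB : ∀ ω, ∀ q ≤ n, pSum (Y ω ∘ Sum.inr) q = Sp q ω := by
    intro ω
    refine pSum_eq_of_step _ (fun q => Sp q ω) (hSp0 ω) ?_
    intro i hi
    have hx : (Y ω ∘ Sum.inr) ⟨i, hi⟩ = θp (i + 1) ω := by
      simp [hY_def, he'_def]
    rw [hx]
    rw [hSpstep i ω]
  -- characterization of the event `τ k = l`
  have hτchar : ∀ ω, τ k ω = l ↔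
      ((∀ m < l, S l ω < S m ω) ∧ ∀ m ≤ k, S l ω ≤ S m ω) := by
    intro ω
    set A := {m | m ≤ k ∧ ∀ i ≤ k, S m ω ≤ S i ω} with hA
    have hAne : A.Nonempty := by
      obtain ⟨m, hm, hmin⟩ :=
        Finset.exists_min_image (Finset.range (k + 1)) (fun i => S i ω) ⟨0, by simp⟩
      exact ⟨m, Nat.lt_succ_iff.mp (Finset.mem_range.mp hm),
        fun i hi => hmin i (Finset.mem_range.mpr (Nat.lt_succ_of_le hi))⟩
    rw [hτ]
    constructor
    · intro h
      have hmem : l ∈ A := h ▸ Nat.sInf_mem hAne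
      refine ⟨?_, hmem.2⟩
      intro m hm
      have hnot : m ∉ A := Nat.notMem_of_lt_sInf (h ▸ hm)
      simp only [hA, Set.mem_setOf_eq, not_and, not_forall] at hnot
      obtain ⟨i, hi, hlt⟩ := hnot (by omega)
      exact lt_of_le_of_lt (hmem.2 i hi) (not_le.mp hlt)
    · rintro ⟨h1, h2⟩
      have hmem : l ∈ A := ⟨hlk, h2⟩
      refine le_antisymm (Nat.sInf_le hmem) ?_
      by_contra hcon
      push_neg at hcon
      have hin := Nat.sInf_mem hAne
      exact absurd (hin.2 l hlk) (not_le.mpr (h1 _ hcon))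
  -- the LHS event is measurable
  have hAset : {ω | τ k ω = l} =
      {ω | (∀ m < l, S l ω < S m ω) ∧ ∀ m ≤ k, S l ω ≤ S m ω} := by
    ext ω; exact hτchar ω
  have hAmeas : MeasurableSet {ω | τ k ω = l} := by
    rw [hAset]
    have : {ω | (∀ m < l, S l ω < S m ω) ∧ ∀ m ≤ k, S l ω ≤ S m ω} =
        (⋂ (m : ℕ) (_ : m < l), {ω | S l ω < S m ω}) ∩
          ⋂ (m : ℕ) (_ : m ≤ k), {ω | S l ω ≤ S m ω} := by
      ext ω; simp [Set.mem_iInter]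
    rw [this]
    exact (MeasurableSet.iInter fun m => MeasurableSet.iInter fun _ =>
        measurableSet_lt (hSmeas l) (hSmeas m)).inter
      (MeasurableSet.iInter fun m => MeasurableSet.iInter fun _ =>
        measurableSet_le (hSmeas l) (hSmeas m))
  -- the RHS event is measurable
  have hEmeas : MeasurableSet {ω | (∀ p ∈ Icc 1 l, Sm p ω < 0) ∧ ∀ q ≤ n, 0 ≤ Sp q ω} := by
    have : {ω | (∀ p ∈ Icc 1 l, Sm p ω < 0) ∧ ∀ q ≤ n, 0 ≤ Sp q ω} =
        (⋂ p ∈ Icc 1 l, {ω | Sm p ω < 0}) ∩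
          ⋂ (q : ℕ) (_ : q ≤ n), {ω | 0 ≤ Sp q ω} := by
      ext ω; simp [Set.mem_iInter]
    rw [this]
    exact (MeasurableSet.biInter (Set.to_countable _)
        (fun p _ => measurableSet_lt (hSm_meas p) measurable_const)).inter
      (MeasurableSet.iInter fun q => MeasurableSet.iInter fun _ =>
        measurableSet_le measurable_const (hSp_meas q))
  -- pointwise identity on `Ω`
  have hXind : ∀ ω, Set.indicator {ω | τ k ω = l}
      (fun ω => Real.exp (-S j ω) / W k ω) ω = Gfun l n j (X ω) := by
    intro ω
    have hcond : ((∀ p ∈ Finset.Icc 1 l, pSum (X ω ∘ Sum.inl) p < 0) ∧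
        (∀ q ≤ n, 0 ≤ pSum (X ω ∘ Sum.inr) q)) ↔ τ k ω = l := by
      rw [hτchar]
      constructor
      · rintro ⟨h1, h2⟩
        constructor
        · intro m hm
          have hp : l - m ∈ Finset.Icc 1 l := by simp; omega
          have := h1 (l - m) hp
          rw [hXA ω (l - m) (by omega)] at this
          have hml : l - (l - m) = m := by omega
          rw [hml] at this
          linarith
        · intro m hm
          rcases lt_or_ge m l with hml | hml
          · have hp : l - m ∈ Finset.Icc 1 l := by simp; omega
            have := h1 (l - m) hp
            rw [hXA ω (l - m) (by omega)] at this
            have h3 : l - (l - m) = m := by omega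
            rw [h3] at this
            linarith
          · have hq : m - l ≤ n := by omega
            have := h2 (m - l) hq
            rw [hXB ω (m - l) hq] at this
            have h3 : l + (m - l) = m := by omega
            rw [h3] at this
            linarith
      · rintro ⟨h1, h2⟩
        constructor
        · intro p hp
          simp only [Finset.mem_Icc] at hp
          rw [hXA ω p hp.2]
          have := h1 (l - p) (by omega)
          linarith
        · intro q hq
          rw [hXB ω q hq]
          have := h2 (l + q) (by omega)
          linarith
    by_cases hev : τ k ω = l
    · rw [Set.indicator_of_mem (by exact hev), Gfun, if_pos (hcond.mpr hev)]
      -- value identity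
      have hnum : pSum (X ω ∘ Sum.inr) (j - l) = S j ω - S l ω := by
        rw [hXB ω (j - l) hjln]
        have : l + (j - l) = j := by omega
        rw [this]
      have hden : (∑ p ∈ Finset.Icc 1 l, Real.exp (pSum (X ω ∘ Sum.inl) p)) +
          ∑ q ∈ Finset.range (n + 1), Real.exp (-(pSum (X ω ∘ Sum.inr) q)) =
          Real.exp (S l ω) * W k ω := by
        have h1 : ∑ p ∈ Finset.Icc 1 l, Real.exp (pSum (X ω ∘ Sum.inl) p) =
            ∑ m ∈ Finset.range l, Real.exp (S l ω - S m ω) := by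
          refine Finset.sum_nbij' (fun p => l - p) (fun m => l - m) ?_ ?_ ?_ ?_ ?_
          · intro p hp; simp only [Finset.mem_Icc] at hp; simp; omega
          · intro m hm; simp only [Finset.mem_range] at hm; simp; omega
          · intro p hp; simp only [Finset.mem_Icc] at hp; omega
          · intro m hm; simp only [Finset.mem_range] at hm; omega
          · intro p hp
            simp only [Finset.mem_Icc] at hp
            rw [hXA ω p hp.2]
        have h2 : ∑ q ∈ Finset.range (n + 1), Real.exp (-(pSum (X ω ∘ Sum.inr) q)) =
            ∑ m ∈ Finset.Ico l (k + 1), Real.exp (S l ω - S m ω) := by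
          rw [Finset.sum_Ico_eq_sum_range]
          have hkn : k + 1 - l = n + 1 := by omega
          rw [hkn]
          refine Finset.sum_congr rfl fun q hq => ?_
          simp only [Finset.mem_range] at hq
          rw [hXB ω q (by omega)]
          ring_nf
        rw [h1, h2]
        have h3 : ∑ m ∈ Finset.range l, Real.exp (S l ω - S m ω) +
            ∑ m ∈ Finset.Ico l (k + 1), Real.exp (S l ω - S m ω) =
            ∑ m ∈ Finset.range (k + 1), Real.exp (S l ω - S m ω) := by
          rw [Finset.range_eq_Ico, Finset.range_eq_Ico]
          exact Finset.sum_Ico_consecutive _ (Nat.zero_le l) (by omega)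
        rw [h3, hW]
        rw [Finset.mul_sum]
        refine Finset.sum_congr rfl fun m _ => ?_
        rw [← Real.exp_add]
        ring_nf
      rw [hnum, hden]
      have : Real.exp (-(S j ω - S l ω)) = Real.exp (-S j ω) * Real.exp (S l ω) := by
        rw [← Real.exp_add]; ring_nf
      rw [this, mul_comm (Real.exp (S l ω)) (W k ω)]
      exact (mul_div_mul_right _ _ (Real.exp_ne_zero _)).symm
    · rw [Set.indicator_of_notMem (by exact hev), Gfun, if_neg (fun hc => hev (hcond.mp hc))]
  -- pointwise identity on `Ω'`
  have hYind : ∀ ω, Set.indicator {ω | (∀ p ∈ Icc 1 l, Sm p ω < 0) ∧ ∀ q ≤ n, 0 ≤ Sp q ω}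
      (fun ω => Real.exp (-Sp (j - l) ω) /
        ((∑ p ∈ Icc 1 l, Real.exp (Sm p ω)) +
          ∑ q ∈ range (n + 1), Real.exp (-Sp q ω))) ω = Gfun l n j (Y ω) := by
    intro ω
    have hcond : ((∀ p ∈ Finset.Icc 1 l, pSum (Y ω ∘ Sum.inl) p < 0) ∧
        (∀ q ≤ n, 0 ≤ pSum (Y ω ∘ Sum.inr) q)) ↔
        ((∀ p ∈ Icc 1 l, Sm p ω < 0) ∧ ∀ q ≤ n, 0 ≤ Sp q ω) := by
      constructor
      · rintro ⟨h1, h2⟩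
        refine ⟨fun p hp => ?_, fun q hq => ?_⟩
        · have := h1 p hp
          simp only [Finset.mem_Icc] at hp
          rwa [hYA ω p hp.2] at this
        · have := h2 q hq
          rwa [hYB ω q hq] at this
      · rintro ⟨h1, h2⟩
        refine ⟨fun p hp => ?_, fun q hq => ?_⟩
        · have hple : p ≤ l := (Finset.mem_Icc.mp hp).2
          rw [hYA ω p hple]; exact h1 p hp
        · rw [hYB ω q hq]; exact h2 q hq
    by_cases hev : (∀ p ∈ Icc 1 l, Sm p ω < 0) ∧ ∀ q ≤ n, 0 ≤ Sp q ω
    · rw [Set.indicator_of_mem (by exact hev), Gfun, if_pos (hcond.mpr hev)]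
      have hnum : pSum (Y ω ∘ Sum.inr) (j - l) = Sp (j - l) ω := hYB ω (j - l) hjln
      have hsum1 : ∑ p ∈ Finset.Icc 1 l, Real.exp (pSum (Y ω ∘ Sum.inl) p) =
          ∑ p ∈ Icc 1 l, Real.exp (Sm p ω) := by
        refine Finset.sum_congr rfl fun p hp => ?_
        rw [hYA ω p (Finset.mem_Icc.mp hp).2]
      have hsum2 : ∑ q ∈ Finset.range (n + 1), Real.exp (-(pSum (Y ω ∘ Sum.inr) q)) =
          ∑ q ∈ range (n + 1), Real.exp (-Sp q ω) := by
        refine Finset.sum_congr rfl fun q hq => ?_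
        rw [hYB ω q (by simpa using Nat.lt_succ_iff.mp (Finset.mem_range.mp hq))]
      rw [hnum, hsum1, hsum2]
    · rw [Set.indicator_of_notMem (by exact hev), Gfun, if_neg (fun hc => hev (hcond.mp hc))]
  -- assemble
  calc
    ∫ ω in {ω | τ k ω = l}, Real.exp (-S j ω) / W k ω ∂P
        = ∫ ω, Set.indicator {ω | τ k ω = l}
            (fun ω => Real.exp (-S j ω) / W k ω) ω ∂P := (integral_indicator hAmeas).symm
    _ = ∫ ω, Gfun l n j (X ω) ∂P := by
          refine integral_congr_ae (Filter.Eventually.of_forall fun ω => ?_)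
          exact hXind ω
    _ = ∫ v, Gfun l n j v ∂(P.map X) :=
          (integral_map hXmeas.aemeasurable
            (Gfun_measurable l n j).aestronglyMeasurable).symm
    _ = ∫ v, Gfun l n j v ∂(P'.map Y) := by rw [hlawX, ← hlawY]
    _ = ∫ ω, Gfun l n j (Y ω) ∂P' :=
          integral_map hYmeas.aemeasurable (Gfun_measurable l n j).aestronglyMeasurable
    _ = ∫ ω, Set.indicator {ω | (∀ p ∈ Icc 1 l, Sm p ω < 0) ∧ ∀ q ≤ n, 0 ≤ Sp q ω}
            (fun ω => Real.exp (-Sp (j - l) ω) /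
              ((∑ p ∈ Icc 1 l, Real.exp (Sm p ω)) +
                ∑ q ∈ range (n + 1), Real.exp (-Sp q ω))) ω ∂P' := by
          refine integral_congr_ae (Filter.Eventually.of_forall fun ω => ?_)
          exact (hYind ω).symm
    _ = ∫ ω in {ω | (∀ p ∈ Icc 1 l, Sm p ω < 0) ∧ ∀ q ≤ n, 0 ≤ Sp q ω},
          Real.exp (-Sp (j - l) ω) /
            ((∑ p ∈ Icc 1 l, Real.exp (Sm p ω)) +
              ∑ q ∈ range (n + 1), Real.exp (-Sp q ω)) ∂P' := integral_indicator hEmeas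
end
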